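/- Let T = (V, E; f, g) be a weighted tree with n > 1 vertices, let u be a pendant (degree-one) vertex of T with pendant edge e = (u, v), and let T' = (V∖{u}, E∖{e}; f', g') be the weighted tree with f'(v) = f(v)(f(u)g(e) + 1), f'(w) = f(w) for all w ≠ v, and g' the restriction of g. Then for every two distinct vertices w₁, w₂ of T with w₁ ≠ u and w₂ ≠ u, F(T; f, g; w₁, w₂) = F(T'; f', g'; w₁, w₂). -/

import Mathlib

open SimpleGraph

/-- `S` is the vertex set of a subtree of `G`: a nonempty set of vertices
whose induced subgraph is connected. -/
def SimpleGraph.IsSubtree {V : Type*} (G : SimpleGraph V) (S : Finset V) : Prop :=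
  S.Nonempty ∧ (G.induce (S : Set V)).Connected

/-- `χ(G)`: the number of subtrees of `G`. -/
noncomputable def SimpleGraph.subtreeCount {V : Type*} (G : SimpleGraph V) : ℕ :=
  Nat.card {S : Finset V // G.IsSubtree S}

/-- The weight of a subtree with vertex set `S`: the product of the weights of its
vertices times the product of the weights of the edges of `G` joining two vertices
of `S`. -/
noncomputable def SimpleGraph.subtreeWeight {V R : Type*} [CommRing R]
    (G : SimpleGraph V) (f : V → R) (g : Sym2 V → R) (S : Finset V) : R :=
  (∏ v ∈ S, f v) * ∏ᶠ e ∈ {e : Sym2 V | e ∈ G.edgeSet ∧ ∀ x ∈ e, x ∈ S}, g e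

/-- `F(G; f, g)`: the sum of the weights of all subtrees of `G`. -/
noncomputable def SimpleGraph.subtreeSum {V R : Type*} [CommRing R]
    (G : SimpleGraph V) (f : V → R) (g : Sym2 V → R) : R :=
  ∑ᶠ S ∈ {S : Finset V | G.IsSubtree S}, G.subtreeWeight f g S

/-- `F(G; f, g; w)`: the sum of the weights of all subtrees of `G` containing `w`. -/
noncomputable def SimpleGraph.subtreeSumAt {V R : Type*} [CommRing R]
    (G : SimpleGraph V) (f : V → R) (g : Sym2 V → R) (w : V) : R :=
  ∑ᶠ S ∈ {S : Finset V | G.IsSubtree S ∧ w ∈ S}, G.subtreeWeight f g S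

/-- `F(G; f, g; w₁, w₂)`: the sum of the weights of all subtrees of `G` containing
both `w₁` and `w₂`. -/
noncomputable def SimpleGraph.subtreeSumAt2 {V R : Type*} [CommRing R]
    (G : SimpleGraph V) (f : V → R) (g : Sym2 V → R) (w₁ w₂ : V) : R :=
  ∑ᶠ S ∈ {S : Finset V | G.IsSubtree S ∧ w₁ ∈ S ∧ w₂ ∈ S}, G.subtreeWeight f g S
/-! Split the subtrees of `G` through `w₁, w₂` according to whether they contain the pendant vertex
`u`. Those that do are exactly the sets `insert u S` with `S` a subtree avoiding `u` and containing
its unique neighbour `v`, and `insert u S` weighs `f u * g s(u, v)` times as much as `S`. Hence the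
whole sum runs over subtrees avoiding `u`, each counted with the extra factor `f u * g s(u, v) + 1`
exactly when it contains `v`: this is the subtree sum of `G - u` with `v` reweighted. -/

namespace SimpleGraph

variable {V R : Type*} {G : SimpleGraph V}

lemma Preconnected.induce_diff_singleton {s : Set V} (hs : (G.induce s).Preconnected) {u : V}
    (hu : (G.neighborSet u).Subsingleton) : (G.induce (s \ {u})).Preconnected := by
  rintro ⟨a, has, hau⟩ ⟨b, hbs, hbu⟩
  obtain ⟨p, hp⟩ := hs.exists_isPath ⟨a, has⟩ ⟨b, hbs⟩
  let q := p.map (Embedding.induce (G := G) s).toHom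
  have hq : q.IsPath := hp.map (Embedding.induce (G := G) s).injective
  refine ⟨q.induce (s \ {u}) fun x hx => ⟨?_, ?_⟩⟩
  · rw [Walk.support_map, List.mem_map] at hx
    obtain ⟨y, -, rfl⟩ := hx
    exact y.2
  · rintro rfl
    exact hq.isTrail.not_mem_support_of_subsingleton_neighborSet (Ne.symm hau) (Ne.symm hbu) hu
      hx

lemma IsSubtree.exists_adj_mem {S : Finset V} (hS : G.IsSubtree S) {u w : V} (hu : u ∈ S)
    (hw : w ∈ S) (hwu : w ≠ u) : ∃ x ∈ S, G.Adj u x := by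
  obtain ⟨p⟩ := hS.2.preconnected ⟨u, hu⟩ ⟨w, hw⟩
  exact ⟨p.snd, p.snd.2, p.adj_snd (Walk.not_nil_of_ne fun h => hwu (congrArg Subtype.val h).symm)⟩

lemma isSubtree_induce_iff {s : Set V} {S : Finset s} :
    (G.induce s).IsSubtree S ↔ G.IsSubtree (S.map (Function.Embedding.subtype _)) := by
  let e := (Embedding.induce (G := G) s).comp (Embedding.induce (S : Set s))
  have hrange : Set.range e = (S.map (Function.Embedding.subtype _) : Set V) := by
    ext x
    simp only [Set.mem_range, Finset.coe_map, Set.mem_image, Finset.mem_coe]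
    exact ⟨fun ⟨y, hy⟩ => ⟨y, y.2, hy⟩, fun ⟨y, hy, hyx⟩ => ⟨⟨y, hy⟩, hyx⟩⟩
  rw [IsSubtree, IsSubtree, Finset.map_nonempty, ← hrange, e.isoInduceRange.connected_iff]

lemma setOf_edge_mem_map_subtype {s : Set V} (S : Finset s) :
    {e : Sym2 V | e ∈ G.edgeSet ∧ ∀ x ∈ e, x ∈ S.map (Function.Embedding.subtype _)} =
      Sym2.map Subtype.val '' {e : Sym2 s | e ∈ (G.induce s).edgeSet ∧ ∀ x ∈ e, x ∈ S} := by
  ext e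
  constructor
  · rintro ⟨he, hS⟩
    induction e with
    | _ a b =>
      obtain ⟨a', ha', rfl⟩ := Finset.mem_map.mp (hS a (Sym2.mem_mk_left a b))
      obtain ⟨b', hb', rfl⟩ := Finset.mem_map.mp (hS b (Sym2.mem_mk_right _ b))
      refine ⟨s(a', b'), ⟨he, ?_⟩, rfl⟩
      simp [ha', hb']
  · rintro ⟨e', ⟨he', hS⟩, rfl⟩
    induction e' with
    | _ a b => exact ⟨he', by simpa using hS⟩

variable [CommRing R]

lemma subtreeWeight_induce (s : Set V) (f : V → R) (g : Sym2 V → R) (S : Finset s) :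
    (G.induce s).subtreeWeight (fun x => f x) (fun e => g (e.map Subtype.val)) S =
      G.subtreeWeight f g (S.map (Function.Embedding.subtype _)) := by
  rw [subtreeWeight, subtreeWeight, Finset.prod_map, setOf_edge_mem_map_subtype,
    finprod_mem_image (Sym2.map.injective Subtype.val_injective).injOn]
  rfl

lemma subtreeSumAt2_induce (s : Set V) (f : V → R) (g : Sym2 V → R) (w₁ w₂ : s) :
    (G.induce s).subtreeSumAt2 (fun x => f x) (fun e => g (e.map Subtype.val)) w₁ w₂ =
      ∑ᶠ S ∈ {S : Finset V | G.IsSubtree S ∧ ↑w₁ ∈ S ∧ ↑w₂ ∈ S} ∩ {S | ↑S ⊆ s},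
        G.subtreeWeight f g S := by
  classical
  have himage : {S : Finset V | G.IsSubtree S ∧ ↑w₁ ∈ S ∧ ↑w₂ ∈ S} ∩ {S | ↑S ⊆ s} =
      Finset.map (Function.Embedding.subtype _) ''
        {S | (G.induce s).IsSubtree S ∧ w₁ ∈ S ∧ w₂ ∈ S} := by
    ext S
    constructor
    · rintro ⟨⟨hS, h₁, h₂⟩, hSs⟩
      have hmap := Finset.subtype_map_of_mem (p := (· ∈ s)) hSs
      refine ⟨S.subtype (· ∈ s), ⟨?_, ?_, ?_⟩, hmap⟩
      · rwa [isSubtree_induce_iff, hmap]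
      · exact Finset.mem_subtype.mpr h₁
      · exact Finset.mem_subtype.mpr h₂
    · rintro ⟨S, ⟨hS, h₁, h₂⟩, rfl⟩
      refine ⟨⟨isSubtree_induce_iff.mp hS, Finset.mem_map_of_mem _ h₁,
        Finset.mem_map_of_mem _ h₂⟩, ?_⟩
      intro x hx
      obtain ⟨y, -, rfl⟩ := Finset.mem_map.mp hx
      exact y.2
  rw [himage, finsum_mem_image (Finset.map_injective _).injOn, subtreeSumAt2]
  simp only [subtreeWeight_induce]

variable [DecidableEq V]

lemma IsSubtree.erase {S : Finset V} (hS : G.IsSubtree S) {u w : V}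
    (hu : (G.neighborSet u).Subsingleton) (hw : w ∈ S) (hwu : w ≠ u) :
    G.IsSubtree (S.erase u) := by
  refine ⟨⟨w, Finset.mem_erase.mpr ⟨hwu, hw⟩⟩, ?_⟩
  rw [Finset.coe_erase]
  exact (connected_iff _).mpr
    ⟨hS.2.preconnected.induce_diff_singleton hu, ⟨w, hw, hwu⟩⟩

lemma IsSubtree.insert_of_adj {S : Finset V} (hS : G.IsSubtree S) {u v : V} (hv : v ∈ S)
    (hadj : G.Adj u v) : G.IsSubtree (insert u S) := by
  refine ⟨Finset.insert_nonempty u S, ?_⟩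
  rw [Finset.coe_insert, ← Set.union_singleton]
  exact connected_induce_union hS.2.preconnected Preconnected.of_subsingleton hv rfl hadj.symm

lemma subtreeWeight_update_mul_of_mem (f : V → R) (g : Sym2 V → R) {S : Finset V} {v : V}
    (hv : v ∈ S) (a : R) :
    G.subtreeWeight (Function.update f v (f v * a)) g S = a * G.subtreeWeight f g S := by
  rw [subtreeWeight, subtreeWeight, Finset.prod_update_of_mem hv,
    Finset.sdiff_singleton_eq_erase, ← Finset.mul_prod_erase S f hv]
  ring

lemma subtreeWeight_update_of_notMem (f : V → R) (g : Sym2 V → R) {S : Finset V} {v : V}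
    (hv : v ∉ S) (b : R) :
    G.subtreeWeight (Function.update f v b) g S = G.subtreeWeight f g S := by
  rw [subtreeWeight, subtreeWeight, Finset.prod_update_of_notMem hv]

lemma setOf_edge_mem_insert {u v : V} (hu : (G.neighborSet u).Subsingleton) (hadj : G.Adj u v)
    {S : Finset V} (hv : v ∈ S) :
    {e | e ∈ G.edgeSet ∧ ∀ x ∈ e, x ∈ insert u S} =
      insert s(u, v) {e | e ∈ G.edgeSet ∧ ∀ x ∈ e, x ∈ S} := by
  have huniq : ∀ x, G.Adj u x → x = v := fun x hx => hu hx hadj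
  ext e
  induction e with
  | _ a b =>
    simp only [Set.mem_ofPred_eq, Set.mem_insert_iff, mem_edgeSet, Sym2.mem_iff,
      forall_eq_or_imp, forall_eq, Finset.mem_insert, Sym2.eq_iff]
    grind [G.adj_symm, G.ne_of_adj]

lemma subtreeWeight_insert_of_adj (f : V → R) (g : Sym2 V → R) {u v : V}
    (hu : (G.neighborSet u).Subsingleton) (hadj : G.Adj u v) {S : Finset V} (huS : u ∉ S)
    (hv : v ∈ S) :
    G.subtreeWeight f g (insert u S) = f u * g s(u, v) * G.subtreeWeight f g S := by
  have hfin : {e | e ∈ G.edgeSet ∧ ∀ x ∈ e, x ∈ S}.Finite :=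
    S.sym2.finite_toSet.subset fun e he => Finset.mem_sym2_iff.mpr he.2
  rw [subtreeWeight, subtreeWeight, Finset.prod_insert huS, setOf_edge_mem_insert hu hadj hv,
    finprod_mem_insert _ (fun h => huS (h.2 u (Sym2.mem_mk_left u v))) hfin]
  ring

theorem subtreeSumAt2_eq_finsum_avoiding_pendant [Finite V] {u v w₁ w₂ : V}
    (hu : (G.neighborSet u).Subsingleton) (hadj : G.Adj u v) (hw₁ : w₁ ≠ u) (hw₂ : w₂ ≠ u)
    (f : V → R) (g : Sym2 V → R) :
    G.subtreeSumAt2 f g w₁ w₂ =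
      ∑ᶠ S ∈ {S : Finset V | G.IsSubtree S ∧ w₁ ∈ S ∧ w₂ ∈ S} \ {S | u ∈ S},
        G.subtreeWeight (Function.update f v (f v * (f u * g s(u, v) + 1))) g S := by
  set A := {S : Finset V | G.IsSubtree S ∧ w₁ ∈ S ∧ w₂ ∈ S}
  set U := {S : Finset V | u ∈ S}
  set N := {S : Finset V | v ∈ S}
  have himage : A ∩ U = insert u '' ((A \ U) ∩ N) := by
    ext S
    constructor
    · rintro ⟨⟨hS, h₁, h₂⟩, huS⟩
      obtain ⟨x, hxS, hux⟩ := hS.exists_adj_mem huS h₁ hw₁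
      have hvS : v ∈ S := hu hux hadj ▸ hxS
      exact ⟨S.erase u, ⟨⟨⟨hS.erase hu h₁ hw₁, Finset.mem_erase.mpr ⟨hw₁, h₁⟩,
        Finset.mem_erase.mpr ⟨hw₂, h₂⟩⟩, Finset.notMem_erase u S⟩,
        Finset.mem_erase.mpr ⟨hadj.ne.symm, hvS⟩⟩, Finset.insert_erase huS⟩
    · rintro ⟨S, ⟨⟨⟨hS, h₁, h₂⟩, -⟩, hvS⟩, rfl⟩
      exact ⟨⟨hS.insert_of_adj hvS hadj, Finset.mem_insert_of_mem h₁,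
        Finset.mem_insert_of_mem h₂⟩, Finset.mem_insert_self u S⟩
  have hinj : ((A \ U) ∩ N).InjOn (insert u) := fun S hS T hT hST => by
    rw [← Finset.erase_insert hS.1.2, hST, Finset.erase_insert hT.1.2]
  calc G.subtreeSumAt2 f g w₁ w₂
      = ∑ᶠ S ∈ A ∩ U, G.subtreeWeight f g S + ∑ᶠ S ∈ A \ U, G.subtreeWeight f g S :=
        (finsum_mem_inter_add_sdiff _ (Set.toFinite _)).symm
    _ = ∑ᶠ S ∈ (A \ U) ∩ N, f u * g s(u, v) * G.subtreeWeight f g S +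
          (∑ᶠ S ∈ (A \ U) ∩ N, G.subtreeWeight f g S +
            ∑ᶠ S ∈ (A \ U) \ N, G.subtreeWeight f g S) := by
        rw [himage, finsum_mem_image hinj, finsum_mem_inter_add_sdiff _ (Set.toFinite _)]
        exact congrArg (· + _) (finsum_mem_congr rfl fun S hS =>
          subtreeWeight_insert_of_adj f g hu hadj hS.1.2 hS.2)
    _ = ∑ᶠ S ∈ (A \ U) ∩ N, (f u * g s(u, v) + 1) * G.subtreeWeight f g S +
          ∑ᶠ S ∈ (A \ U) \ N, G.subtreeWeight f g S := by
        rw [← add_assoc, ← finsum_mem_add_distrib (Set.toFinite _)]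
        simp only [add_one_mul]
    _ = _ := by
        rw [← finsum_mem_inter_add_sdiff N (Set.toFinite (A \ U))]
        congr 1 <;> refine finsum_mem_congr rfl fun S hS => ?_
        · exact (subtreeWeight_update_mul_of_mem f g hS.2 _).symm
        · exact (subtreeWeight_update_of_notMem f g hS.2 _).symm

end SimpleGraph

theorem subtreeSumAt2_pendant_contraction_general {V R : Type*} [Fintype V]
    [CommRing R] (G : SimpleGraph V) [DecidableRel G.Adj]
    (u v : V) (hdeg : G.degree u = 1) (hadj : G.Adj u v) (hvu : v ≠ u)
    (f : V → R) (g : Sym2 V → R)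
    (f' : {w : V // w ≠ u} → R)
    (hf'v : f' ⟨v, hvu⟩ = f v * (f u * g s(u, v) + 1))
    (hf'other : ∀ w : {w : V // w ≠ u}, (w : V) ≠ v → f' w = f (w : V))
    (w₁ w₂ : V) (hw₁ : w₁ ≠ u) (hw₂ : w₂ ≠ u) :
    G.subtreeSumAt2 f g w₁ w₂ =
      (G.induce {w : V | w ≠ u}).subtreeSumAt2 f' (fun e => g (e.map Subtype.val))
        ⟨w₁, hw₁⟩ ⟨w₂, hw₂⟩ := by
  classical
  have hu : (G.neighborSet u).Subsingleton := fun x hx y hy =>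
    (degree_eq_one_iff_existsUnique_adj.mp hdeg).unique hx hy
  have hf' : f' = fun w : {w : V // w ≠ u} =>
      Function.update f v (f v * (f u * g s(u, v) + 1)) w := by
    funext w
    by_cases hwv : (w : V) = v
    · obtain rfl : w = ⟨v, hvu⟩ := Subtype.ext hwv
      simp [hf'v]
    · simp [hf'other w hwv, hwv]
  have hcompl : {S : Finset V | ↑S ⊆ {w | w ≠ u}} = {S | u ∈ S}ᶜ := by
    ext S
    simp [Set.subset_def]
  rw [G.subtreeSumAt2_eq_finsum_avoiding_pendant hu hadj hw₁ hw₂, hf']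
  refine Eq.trans ?_ (SimpleGraph.subtreeSumAt2_induce {w | w ≠ u} _ g ⟨w₁, hw₁⟩ ⟨w₂, hw₂⟩).symm
  rw [hcompl, Set.sdiff_eq]

/-- Pendant contraction for the subtree generating function rooted at two vertices.
With `T'` the weighted tree obtained from `T` by deleting the pendant vertex `u`
(with pendant edge `(u,v)`) and reweighting `v` by `f' v = f v * (f u * g s(u,v) + 1)`,
we have `F(T; f, g; w₁, w₂) = F(T'; f', g'; w₁, w₂)` for all distinct vertices
`w₁, w₂` different from `u`. -/
theorem subtreeSumAt2_pendant_contraction {V R : Type*} [Fintype V] [DecidableEq V]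
    [CommRing R] (G : SimpleGraph V) [DecidableRel G.Adj]
    (hG : G.IsTree) (hn : 1 < Fintype.card V)
    (u v : V) (hdeg : G.degree u = 1) (hadj : G.Adj u v) (hvu : v ≠ u)
    (f : V → R) (g : Sym2 V → R)
    (f' : {w : V // w ≠ u} → R)
    (hf'v : f' ⟨v, hvu⟩ = f v * (f u * g s(u, v) + 1))
    (hf'other : ∀ w : {w : V // w ≠ u}, (w : V) ≠ v → f' w = f (w : V))
    (w₁ w₂ : V) (hw : w₁ ≠ w₂) (hw₁ : w₁ ≠ u) (hw₂ : w₂ ≠ u) :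
    G.subtreeSumAt2 f g w₁ w₂ =
      (G.induce {w : V | w ≠ u}).subtreeSumAt2 f' (fun e => g (e.map Subtype.val))
        ⟨w₁, hw₁⟩ ⟨w₂, hw₂⟩ :=
  subtreeSumAt2_pendant_contraction_general G u v hdeg hadj hvu f g f' hf'v hf'other w₁ w₂ hw₁ hw₂
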